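/- arXiv:1710.10561 — 12 statements merged into one kernel-verified Lean document; each statement's English description precedes it below -/
import Mathlib

section
/- Let A be an involutive implication zroupoid satisfying the identity 0 → x ≈ x. Then A satisfies the identity (x → y)' ≈ x' → y'. -/
theorem stmt1 {A : Type*} (f : A → A → A) (o : A)
    (hI : ∀ x y z : A, f (f x y) z = f (f (f (f z o) x) (f (f y z) o)) o)
    (hI0 : f (f o o) o = o)
    (hInv : ∀ x : A, f (f x o) o = x)
    (h0 : ∀ x : A, f o x = x) :
    ∀ x y : A, f (f x y) o = f (f x o) (f y o) := by
  -- (A): y→z = (z→(y→z)')'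
  have hA : ∀ y z : A, f y z = f (f z (f (f y z) o)) o := by
    intro y z
    have h := hI o y z
    rw [h0 y, hInv z] at h
    exact h
  -- (A'): (y→z)' = z→(y→z)'
  have hA' : ∀ y z : A, f (f y z) o = f z (f (f y z) o) := by
    intro y z
    have h := congrArg (fun t => f t o) (hA y z)
    simpa [hInv] using h
  -- (C): z' = z→z'
  have hC : ∀ z : A, f z o = f z (f z o) := by
    intro z
    have h := hA' o z
    rwa [h0 z] at h
  -- (5): y'→y = y
  have h5 : ∀ y : A, f (f y o) y = y := by
    intro y
    have h := hC (f y o)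
    rw [hInv y] at h
    exact h.symm
  -- (B'): (x'→z)' = (z'→x)→z'
  have hB' : ∀ x z : A, f (f (f x o) z) o = f (f (f z o) x) (f z o) := by
    intro x z
    have h := hI x o z
    rw [h0 z] at h
    have h2 := congrArg (fun t => f t o) h
    simpa [hInv] using h2
  -- (7): (x'→y')' = (y→x)→y
  have h7 : ∀ x y : A, f (f (f x o) (f y o)) o = f (f y x) y := by
    intro x y
    have h := hB' x (f y o)
    rwa [hInv y] at h
  -- (8): (y→x)→y = x→y
  have h8 : ∀ x y : A, f (f y x) y = f x y := by
    intro x y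
    have h := hI y x y
    rw [h5 y, ← hA' x y, hInv (f x y)] at h
    exact h
  intro x y
  have h := (h7 x y).trans (h8 x y)
  have h2 := congrArg (fun t => f t o) h
  simpa [hInv] using h2.symm
end

section
/- Let A be a symmetric implication zroupoid. Then A satisfies the identities x' → y ≈ y' → x, x → y ≈ y' → x', and x → y' ≈ y → x'. -/
theorem stmt3 {A : Type*} (f : A → A → A) (o : A)
    (hI : ∀ x y z : A, f (f x y) z = f (f (f (f z o) x) (f (f y z) o)) o)
    (hI0 : f (f o o) o = o)
    (hInv : ∀ x : A, f (f x o) o = x)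
    (hMC : ∀ x y : A, f (f x (f y o)) o = f (f y (f x o)) o) :
    (∀ x y : A, f (f x o) y = f (f y o) x) ∧
    (∀ x y : A, f x y = f (f y o) (f x o)) ∧
    (∀ x y : A, f x (f y o) = f y (f x o)) := by
  have hinj : ∀ x y : A, f x o = f y o → x = y := fun x y h => by
    rw [← hInv x, h, hInv]
  have h3 : ∀ x y : A, f x (f y o) = f y (f x o) := fun x y => hinj _ _ (hMC x y)
  refine ⟨fun x y => ?_, fun x y => ?_, h3⟩
  · have h := h3 (f x o) (f y o); rwa [hInv y, hInv x] at h
  · have h := h3 x (f y o); rwa [hInv y] at h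
end

section
/- Let A be a symmetric implication zroupoid satisfying the identity x → x ≈ x. Then A satisfies the identity x' ≈ x. -/
theorem stmt4 {A : Type*} (f : A → A → A) (o : A)
    (hI : ∀ x y z : A, f (f x y) z = f (f (f (f z o) x) (f (f y z) o)) o)
    (hI0 : f (f o o) o = o)
    (hInv : ∀ x : A, f (f x o) o = x)
    (hMC : ∀ x y : A, f (f x (f y o)) o = f (f y (f x o)) o)
    (h : ∀ x : A, f x x = x) :
    ∀ x : A, f x o = x := by
  intro x
  have hx := hMC x (f x o)
  rw [hInv, h, h, hInv] at hx
  exact hx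
end

section
/- Let A be a symmetric implication zroupoid satisfying the identity x' ≈ x → x and the equation 0' = 0. Then A satisfies the identity x' ≈ x. -/
theorem stmt5 {A : Type*} (f : A → A → A) (o : A)
    (hI : ∀ x y z : A, f (f x y) z = f (f (f (f z o) x) (f (f y z) o)) o)
    (hI0 : f (f o o) o = o)
    (hInv : ∀ x : A, f (f x o) o = x)
    (hMC : ∀ x y : A, f (f x (f y o)) o = f (f y (f x o)) o)
    (h : ∀ x : A, f x o = f x x)
    (h0 : f o o = o) :
    ∀ x : A, f x o = x := by
  intro x
  have key := hMC x (f x o)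
  rw [hInv x, ← h x, hInv x, ← h (f x o), hInv (f x o)] at key
  exact key.symm
end

section
/- Let A be a symmetric implication zroupoid satisfying the Bol-Moufang identity (A₂₄): x → ((x → y) → z) ≈ (x → (x → y)) → z. Then A satisfies the identity x' ≈ x. -/
theorem stmt7 {A : Type*} (f : A → A → A) (o : A)
    (hI : ∀ x y z : A, f (f x y) z = f (f (f (f z o) x) (f (f y z) o)) o)
    (hI0 : f (f o o) o = o)
    (hInv : ∀ x : A, f (f x o) o = x)
    (hMC : ∀ x y : A, f (f x (f y o)) o = f (f y (f x o)) o)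
    (hA24 : ∀ x y z : A, f x (f (f x y) z) = f (f x (f x y)) z) :
    ∀ x : A, f x o = x := by
  intro x
  calc f x o
    _ = f (x) (f (f (o) (o)) (o)) := by conv_lhs => enter [2]; rw [← hI0]
    _ = f (f (f (x) (f (f (o) (o)) (o))) (o)) (o) := by conv_lhs => rw [← hInv (f (x) (f (f (o) (o)) (o)))]
    _ = f (f (f (f (o) (o)) (f (x) (o))) (o)) (o) := by conv_lhs => enter [1]; rw [hMC (x) (f (o) (o))]
    _ = f (f (o) (o)) (f (x) (o)) := by conv_lhs => rw [hInv (f (f (o) (o)) (f (x) (o)))]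
    _ = f (f (f (f (f (x) (o)) (o)) (o)) (f (f (o) (f (x) (o))) (o))) (o) := by conv_lhs => rw [hI (o) (o) (f (x) (o))]
    _ = f (f (f (x) (o)) (f (f (o) (f (x) (o))) (o))) (o) := by conv_lhs => enter [1, 1]; rw [hInv (f (x) (o))]
    _ = f (f (f (o) (f (x) (o))) (f (f (x) (o)) (o))) (o) := by conv_lhs => rw [hMC (f (x) (o)) (f (o) (f (x) (o)))]
    _ = f (f (f (o) (f (x) (o))) (x)) (o) := by conv_lhs => enter [1, 2]; rw [hInv (x)]
    _ = f (f (f (f (f (x) (o)) (o)) (f (f (f (x) (o)) (x)) (o))) (o)) (o) := by conv_lhs => enter [1]; rw [hI (o) (f (x) (o)) (x)]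
    _ = f (f (f (x) (f (f (f (x) (o)) (x)) (o))) (o)) (o) := by conv_lhs => enter [1, 1, 1]; rw [hInv (x)]
    _ = f (f (f (x) (f (f (f (x) (o)) (f (f (x) (o)) (o))) (o))) (o)) (o) := by conv_lhs => enter [1, 1, 2, 1, 2]; rw [← hInv (x)]
    _ = f (f (f (x) (f (f (x) (o)) (f (f (f (x) (o)) (o)) (o)))) (o)) (o) := by conv_lhs => enter [1, 1, 2]; rw [← hA24 (f (x) (o)) (o) (o)]
    _ = f (f (f (x) (f (f (x) (o)) (f (x) (o)))) (o)) (o) := by conv_lhs => enter [1, 1, 2, 2]; rw [hInv (f (x) (o))]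
    _ = f (f (f (f (x) (f (x) (o))) (f (x) (o))) (o)) (o) := by conv_lhs => enter [1, 1]; rw [hA24 (x) (o) (f (x) (o))]
    _ = f (f (f (x) (f (f (x) (f (x) (o))) (o))) (o)) (o) := by conv_lhs => enter [1]; rw [hMC (f (x) (f (x) (o))) (x)]
    _ = f (x) (f (f (x) (f (x) (o))) (o)) := by conv_lhs => rw [hInv (f (x) (f (f (x) (f (x) (o))) (o)))]
    _ = f (x) (f (f (f (f (o) (o)) (x)) (f (f (f (x) (o)) (o)) (o))) (o)) := by conv_lhs => enter [2]; rw [hI (x) (f (x) (o)) (o)]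
    _ = f (x) (f (f (f (f (x) (o)) (o)) (f (f (f (o) (o)) (x)) (o))) (o)) := by conv_lhs => enter [2]; rw [hMC (f (f (o) (o)) (x)) (f (f (x) (o)) (o))]
    _ = f (x) (f (f (o) (f (o) (o))) (x)) := by conv_lhs => enter [2]; rw [← hI (o) (f (o) (o)) (x)]
    _ = f (x) (f (f (o) (f (o) (o))) (f (f (x) (o)) (o))) := by conv_lhs => enter [2, 2]; rw [← hInv (x)]
    _ = f (x) (f (f (f (f (o) (f (o) (o))) (f (f (x) (o)) (o))) (o)) (o)) := by conv_lhs => enter [2]; rw [← hInv (f (f (o) (f (o) (o))) (f (f (x) (o)) (o)))]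
    _ = f (x) (f (f (f (f (x) (o)) (f (f (o) (f (o) (o))) (o))) (o)) (o)) := by conv_lhs => enter [2, 1]; rw [hMC (f (o) (f (o) (o))) (f (x) (o))]
    _ = f (x) (f (f (x) (o)) (f (f (o) (f (o) (o))) (o))) := by conv_lhs => enter [2]; rw [hInv (f (f (x) (o)) (f (f (o) (f (o) (o))) (o)))]
    _ = f (x) (f (f (x) (o)) (f (o) (f (f (o) (o)) (o)))) := by conv_lhs => enter [2, 2]; rw [← hA24 (o) (o) (o)]
    _ = f (x) (f (f (x) (o)) (f (o) (o))) := by conv_lhs => enter [2, 2, 2]; rw [hI0]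
    _ = f (f (x) (f (x) (o))) (f (o) (o)) := by conv_lhs => rw [hA24 (x) (o) (f (o) (o))]
    _ = f (f (f (f (x) (f (x) (o))) (f (o) (o))) (o)) (o) := by conv_lhs => rw [← hInv (f (f (x) (f (x) (o))) (f (o) (o)))]
    _ = f (f (f (o) (f (f (x) (f (x) (o))) (o))) (o)) (o) := by conv_lhs => enter [1]; rw [hMC (f (x) (f (x) (o))) (o)]
    _ = f (o) (f (f (x) (f (x) (o))) (o)) := by conv_lhs => rw [hInv (f (o) (f (f (x) (f (x) (o))) (o)))]
    _ = f (o) (f (f (f (f (o) (o)) (x)) (f (f (f (x) (o)) (o)) (o))) (o)) := by conv_lhs => enter [2]; rw [hI (x) (f (x) (o)) (o)]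
    _ = f (o) (f (f (f (f (x) (o)) (o)) (f (f (f (o) (o)) (x)) (o))) (o)) := by conv_lhs => enter [2]; rw [hMC (f (f (o) (o)) (x)) (f (f (x) (o)) (o))]
    _ = f (o) (f (f (o) (f (o) (o))) (x)) := by conv_lhs => enter [2]; rw [← hI (o) (f (o) (o)) (x)]
    _ = f (f (o) (f (o) (f (o) (o)))) (x) := by conv_lhs => rw [hA24 (o) (f (o) (o)) (x)]
    _ = f (f (o) (f (f (f (o) (f (o) (o))) (o)) (o))) (x) := by conv_lhs => enter [1, 2]; rw [← hInv (f (o) (f (o) (o)))]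
    _ = f (f (o) (f (f (o) (f (f (o) (o)) (o))) (o))) (x) := by conv_lhs => enter [1, 2, 1]; rw [← hA24 (o) (o) (o)]
    _ = f (f (o) (f (f (o) (o)) (o))) (x) := by conv_lhs => enter [1, 2, 1, 2]; rw [hI0]
    _ = f (f (o) (o)) (x) := by conv_lhs => enter [1, 2]; rw [hI0]
    _ = f (f (f (f (o) (o)) (x)) (o)) (o) := by conv_lhs => rw [← hInv (f (f (o) (o)) (x))]
    _ = f (f (f (f (o) (o)) (x)) (f (f (o) (o)) (o))) (o) := by conv_lhs => enter [1, 2]; rw [← hI0]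
    _ = f (f (x) (o)) (o) := by conv_lhs => rw [← hI (x) (o) (o)]
    _ = x := by conv_lhs => rw [hInv (x)]
end

section
/- Let A be a symmetric implication zroupoid satisfying the Bol-Moufang identity (A₁₃): x → (x → (y → z)) ≈ (x → x) → (y → z). Then A satisfies the identity x' ≈ x. -/
theorem stmt8 {A : Type*} (f : A → A → A) (o : A)
    (hI : ∀ x y z : A, f (f x y) z = f (f (f (f z o) x) (f (f y z) o)) o)
    (hI0 : f (f o o) o = o)
    (hInv : ∀ x : A, f (f x o) o = x)
    (hMC : ∀ x y : A, f (f x (f y o)) o = f (f y (f x o)) o)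
    (hA13 : ∀ x y z : A, f x (f x (f y z)) = f (f x x) (f y z)) :
    ∀ x : A, f x o = x := by
  -- cancellation: if a' = b' then a = b
  have cancel : ∀ a b : A, f a o = f b o → a = b := by
    intro a b h
    calc a = f (f a o) o := (hInv a).symm
    _ = f (f b o) o := by rw [h]
    _ = b := hInv b
  -- E1': f x y = f (f (f o o) x) y
  have E1 : ∀ x y : A, f x y = f (f (f o o) x) y := by
    intro x y
    apply cancel
    calc f (f x y) o = f (f (f (f o o) x) (f (f y o) o)) o := hI x y o
    _ = f (f (f (f o o) x) y) o := by rw [hInv y]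
  -- E2: f (f o o) a = a
  have E2 : ∀ a : A, f (f o o) a = a := fun a => (cancel a _ (E1 a o)).symm
  -- E9: f o (f o b) = b
  have E9 : ∀ b : A, f o (f o b) = b := by
    intro b
    have h1 : f o (f o (f (f b o) o)) = f (f o o) (f (f b o) o) := hA13 o (f b o) o
    rw [hInv b, E2] at h1
    exact h1
  -- E4: f x (f o o) = f o (f x o)
  have E4 : ∀ x : A, f x (f o o) = f o (f x o) := fun x => cancel _ _ (hMC x o)
  -- E13 at c = f o o, giving: ∀ x, f x (f o o) = f (f (f x (f o o)) (f o o)) o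
  have E14pre : ∀ x : A, f x (f o o) = f (f (f x (f o o)) (f o o)) o := by
    intro x
    have h1 : f (f (f x o) o) (f o o) =
        f (f (f (f (f o o) o) (f x o)) (f (f o (f o o)) o)) o := hI (f x o) o (f o o)
    rw [hInv x, hI0] at h1
    have h2 : f o (f o o) = o := E9 o
    rw [h2] at h1
    -- h1 : f x (f o o) = f (f (f o (f x o)) (f o o)) o
    rw [← E4 x] at h1
    exact h1
  -- E14: ∀ w, w = f (f w (f o o)) o  (every w is of the form f x (f o o))
  have E14 : ∀ w : A, w = f (f w (f o o)) o := by
    intro w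
    have hx : f (f (f o w) o) (f o o) = w := by
      rw [E4 (f (f o w) o), hInv (f o w), E9 w]
    calc w = f (f (f o w) o) (f o o) := hx.symm
    _ = f (f (f (f (f o w) o) (f o o)) (f o o)) o := E14pre _
    _ = f (f w (f o o)) o := by rw [hx]
  -- E15: f o v = v
  have E15 : ∀ v : A, f o v = v := by
    intro v
    apply (cancel (f o v) v ?_).symm |>.symm
    -- show f (f o v) o = f v o
    have h := E14 (f v o)
    -- h : f v o = f (f (f v o) (f o o)) o
    rw [E4 (f v o), hInv v] at h
    exact h.symm
  have hoo : f o o = o := E15 o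
  -- E16: f z (f z o) = f z o
  have E16 : ∀ z : A, f z (f z o) = f z o := by
    intro z
    have h := hI o o z
    rw [hoo, E15 z, hInv z] at h
    -- h : z = f (f z (f z o)) o
    calc f z (f z o) = f (f (f z (f z o)) o) o := (hInv _).symm
    _ = f z o := by rw [← h]
  -- E17: f a a = a
  have E17 : ∀ a : A, f a a = a := by
    intro a
    have h := hA13 a o o
    rw [hoo, E16 a] at h
    -- h : f a o = f (f a a) o
    exact (cancel a (f a a) h).symm
  -- Final: MC with y = x'
  intro x
  have h := hMC x (f x o)
  rw [hInv x, E17 x, E17 (f x o), hInv x] at h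
  -- h : f x o = x
  exact h
end

section
/- Let A be a symmetric implication zroupoid satisfying the Moufang identity (B₁₅): x → (y → (x → z)) ≈ ((x → y) → x) → z. Then A satisfies the identity x' ≈ x. -/
theorem stmt9 {A : Type*} (f : A → A → A) (o : A)
    (hI : ∀ x y z : A, f (f x y) z = f (f (f (f z o) x) (f (f y z) o)) o)
    (hI0 : f (f o o) o = o)
    (hInv : ∀ x : A, f (f x o) o = x)
    (hMC : ∀ x y : A, f (f x (f y o)) o = f (f y (f x o)) o)
    (hB15 : ∀ x y z : A, f x (f y (f x z)) = f (f (f x y) x) z) :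
    ∀ x : A, f x o = x := by
  have inj : ∀ a b : A, f a o = f b o → a = b := by
    intro a b h
    have h2 := congrArg (fun t => f t o) h
    simpa [hInv] using h2
  -- (A): f x y = f (f (f o o) x) y
  have hA : ∀ x y : A, f x y = f (f (f o o) x) y := by
    intro x y
    apply inj
    have h1 := hI x y o
    rw [hInv y] at h1
    exact h1
  -- (B): f (f o o) x = x  (left identity)
  have hB : ∀ x : A, f (f o o) x = x := by
    intro x
    exact (inj _ _ (hA x o)).symm
  -- (C): f y z = f (f y (f o o)) z
  have hC : ∀ y z : A, f y z = f (f y (f o o)) z := by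
    intro y z
    have h := hB15 (f o o) y z
    rw [hB, hB, hB] at h
    exact h
  -- (D): f y (f o o) = y  (right identity)
  have hD : ∀ y : A, f y (f o o) = y := by
    intro y
    exact (inj _ _ (hC y o)).symm
  -- (F): z = f (f (f z o) (f z o)) o
  have hF : ∀ z : A, z = f (f (f z o) (f z o)) o := by
    intro z
    have h := hI (f o o) (f o o) z
    rw [hD (f o o), hB z, hD (f z o)] at h
    exact h
  -- idempotence
  have hIdem : ∀ x : A, f x x = x := by
    intro x
    have h := congrArg (fun t => f t o) (hF (f x o))
    simp only [hInv] at h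
    exact h.symm
  -- o o = o
  have hoo : f o o = o := hIdem o
  intro x
  have := hD x
  rwa [hoo] at this
end

section
/- Let A be a symmetric implication zroupoid satisfying the Bol-Moufang identity (A₂₃): x → ((x → y) → z) ≈ (x → x) → (y → z). Then A satisfies the identities: (a) 0 → x ≈ x; (b) (x → x) → y ≈ x → ((x → 0') → y); (c) (x → x) → y ≈ x → (x → y')'. -/
theorem stmt10 {A : Type*} (f : A → A → A) (o : A)
    (hI : ∀ x y z : A, f (f x y) z = f (f (f (f z o) x) (f (f y z) o)) o)
    (hI0 : f (f o o) o = o)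
    (hInv : ∀ x : A, f (f x o) o = x)
    (hMC : ∀ x y : A, f (f x (f y o)) o = f (f y (f x o)) o)
    (hA23 : ∀ x y z : A, f x (f (f x y) z) = f (f x x) (f y z)) :
    (∀ x : A, f o x = x) ∧
    (∀ x y : A, f (f x x) y = f x (f (f x (f o o)) y)) ∧
    (∀ x y : A, f (f x x) y = f x (f (f x (f y o)) o)) := by
  -- L2 : (o→o)→x = x
  have L2 : ∀ x : A, f (f o o) x = x := by
    intro x
    have h := hI x o o
    rw [hI0] at h
    rw [hInv, hInv] at h
    exact h.symm
  -- L11 : (o→y)→z = (z → ((y→z)→o)) → o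
  have L11 : ∀ y z : A, f (f o y) z = f (f z (f (f y z) o)) o := by
    intro y z
    have h := hI o y z
    rw [hInv] at h
    exact h
  -- L13 : o→(o→o) = o→o
  have L13 : f o (f o o) = f o o := by
    have h := L11 o (f o o)
    rw [L2, L2] at h
    -- h : f o o = f (f (f o (f o o)) o) o
    rw [hInv] at h
    exact h.symm
  -- L5 : o→((o→y)→o) = y→o
  have L5 : ∀ y : A, f o (f (f o y) o) = f y o := by
    intro y
    have h := hA23 o y o
    rw [L2] at h
    exact h
  -- h00 : o→o = o
  have h00 : f o o = o := by
    have h := L5 (f o o)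
    rw [L13, hI0] at h
    exact h
  have ha : ∀ x : A, f o x = x := by
    intro x
    have := L2 x
    rwa [h00] at this
  refine ⟨ha, ?_, ?_⟩
  · intro x y
    have h := hA23 x o y
    rw [ha] at h
    rw [h00]
    exact h.symm
  · intro x y
    have h := hA23 x (f y o) o
    rw [hInv] at h
    exact h.symm
end

section
/- Let A be a symmetric implication zroupoid satisfying the Bol-Moufang identity (A₂₅): x → ((x → y) → z) ≈ ((x → x) → y) → z. Then A satisfies the identities: (a) 0 → x ≈ x; (b) (x → y)' ≈ x' → y'; (c) x → (y → (y' → z)) ≈ y → ((y → x) → z). -/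
theorem stmt11 {A : Type*} (f : A → A → A) (o : A)
    (hI : ∀ x y z : A, f (f x y) z = f (f (f (f z o) x) (f (f y z) o)) o)
    (hI0 : f (f o o) o = o)
    (hInv : ∀ x : A, f (f x o) o = x)
    (hMC : ∀ x y : A, f (f x (f y o)) o = f (f y (f x o)) o)
    (hA25 : ∀ x y z : A, f x (f (f x y) z) = f (f (f x x) y) z) :
    (∀ x : A, f o x = x) ∧
    (∀ x y : A, f (f x y) o = f (f x o) (f y o)) ∧
    (∀ x y z : A, f x (f y (f (f y o) z)) = f y (f (f y x) z)) := by
  have a2 : ∀ x2 y2 : A, (f x2 (f y2 o)) = (f y2 (f x2 o)) := by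
    intro x2 y2
    have hL : (f (f (f x2 (f y2 o)) o) o) = (f x2 (f y2 o)) := by
      calc (f (f (f x2 (f y2 o)) o) o)
        _ = (f x2 (f y2 o)) := by rw [hInv (f x2 (f y2 o))]
    have hR : (f (f (f x2 (f y2 o)) o) o) = (f y2 (f x2 o)) := by
      calc (f (f (f x2 (f y2 o)) o) o)
        _ = (f (f (f y2 (f x2 o)) o) o) := by rw [hMC x2 y2]
        _ = (f y2 (f x2 o)) := by rw [hInv (f y2 (f x2 o))]
    exact hL.symm.trans hR
  have a3 : ∀ x2 x21 : A, (f (f x2 o) (f x21 o)) = (f x21 x2) := by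
    intro x2 x21
    have hL : (f x21 (f (f x2 o) o)) = (f (f x2 o) (f x21 o)) := by
      calc (f x21 (f (f x2 o) o))
        _ = (f (f x2 o) (f x21 o)) := by rw [a2 x21 (f x2 o)]
    have hR : (f x21 (f (f x2 o) o)) = (f x21 x2) := by
      calc (f x21 (f (f x2 o) o))
        _ = (f x21 x2) := by rw [hInv x2]
    exact hL.symm.trans hR
  have a24 : ∀ x2 x21 : A, (f (f x2 o) x21) = (f (f x21 o) x2) := by
    intro x2 x21
    have hL : (f (f x21 o) (f (f x2 o) o)) = (f (f x2 o) x21) := by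
      calc (f (f x21 o) (f (f x2 o) o))
        _ = (f (f x2 o) x21) := by rw [a3 x21 (f x2 o)]
    have hR : (f (f x21 o) (f (f x2 o) o)) = (f (f x21 o) x2) := by
      calc (f (f x21 o) (f (f x2 o) o))
        _ = (f (f x21 o) x2) := by rw [hInv x2]
    exact hL.symm.trans hR
  have a25 : ∀ x2 : A, (f (f o o) x2) = x2 := by
    intro x2
    have hL : (f (f x2 o) o) = (f (f o o) x2) := by
      calc (f (f x2 o) o)
        _ = (f (f o o) x2) := by rw [a24 x2 o]
    have hR : (f (f x2 o) o) = x2 := by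
      calc (f (f x2 o) o)
        _ = x2 := by rw [hInv x2]
    exact hL.symm.trans hR
  have a29 : ∀ x22 : A, (f o (f (f o x22) o)) = (f x22 o) := by
    intro x22
    have hL : (f (f (f x22 o) o) o) = (f o (f (f o x22) o)) := by
      calc (f (f (f x22 o) o) o)
        _ = (f (f (f o o) x22) o) := by rw [a24 x22 o]
        _ = (f o (f (f o x22) o)) := by rw [← hA25 o x22 o]
    have hR : (f (f (f x22 o) o) o) = (f x22 o) := by
      calc (f (f (f x22 o) o) o)
        _ = (f x22 o) := by rw [hInv (f x22 o)]
    exact hL.symm.trans hR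
  have p1 : f o o = o := by
    have h1 : f o (f o o) = f o o := by
      have h := hI (f o o) (f o o) (f o o)
      rw [hInv o] at h
      rw [a25 (f o o)] at h
      rw [hInv o] at h
      rw [a25 (f o o)] at h
      rw [hInv (f o (f o o))] at h
      exact h.symm
    have h2 := a29 (f o o)
    rw [h1] at h2
    rw [hInv o] at h2
    exact h2
  have p2 : ∀ x : A, f o x = x := by
    intro x
    have h := a25 x
    rw [p1] at h
    exact h
  -- E13: (a→c)→c' = (a→c)'
  have e13 : ∀ a c : A, f (f a c) (f c o) = f (f a c) o := by
    intro a c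
    have h := hI (f a o) o c
    rw [hInv a] at h
    rw [a3 c a] at h
    rw [p2 c] at h
    -- h : f a c = f (f (f a c) (f c o)) o
    have h2 := congrArg (fun t => f t o) h
    rw [hInv (f (f a c) (f c o))] at h2
    exact h2.symm
  -- E14: c→c' = c'
  have e14 : ∀ c : A, f c (f c o) = f c o := by
    intro c
    have h := e13 o c
    rw [p2 c] at h
    exact h
  -- E15: c'→c = c
  have e15 : ∀ c : A, f (f c o) c = c := by
    intro c
    have h := e13 c (f c o)
    rw [e14 c] at h
    rw [hInv c] at h
    exact h
  -- E26: (b→a)→b = a→b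
  have e26 : ∀ a b : A, f (f b a) b = f a b := by
    intro a b
    have h := hI a b (f b o)
    rw [hInv b] at h
    rw [e14 b] at h
    rw [hInv b] at h
    rw [e13 a b] at h
    -- h : f (f a b) o = f (f (f b a) b) o
    have h2 := congrArg (fun t => f t o) h
    rw [hInv (f a b), hInv (f (f b a) b)] at h2
    exact h2.symm
  -- E37: b→(a→b)' = (a→b)'
  have e37 : ∀ a b : A, f b (f (f a b) o) = f (f a b) o := by
    intro a b
    have h := a2 b (f a b)
    rw [e13 a b] at h
    exact h
  -- E38: a→(a→b) = a→b
  have e38 : ∀ a b : A, f a (f a b) = f a b := by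
    intro a b
    have h := hI a b (f (f a b) o)
    rw [hInv (f a b)] at h
    rw [e37 a b] at h
    rw [hInv (f a b)] at h
    rw [e14 (f a b)] at h
    -- h : f (f a b) o = f (f (f (f a b) a) (f a b)) o
    have h2 := congrArg (fun t => f t o) h
    rw [hInv (f a b), hInv (f (f (f a b) a) (f a b))] at h2
    rw [e26 a (f a b)] at h2
    exact h2.symm
  -- D5: (a→b')→b = a'→b
  have d5 : ∀ a b : A, f (f a (f b o)) b = f (f a o) b := by
    intro a b
    have h := hI a (f b o) b
    rw [e15 b] at h
    rw [a2 (f (f b o) a) b] at h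
    rw [a24 b a] at h
    rw [e37 (f a o) b] at h
    rw [hInv (f (f a o) b)] at h
    exact h
  -- goal (b): (x→y)' = x'→y'
  have g2 : ∀ a b : A, f (f a b) o = f (f a o) (f b o) := by
    intro a b
    have h := d5 a (f b o)
    rw [hInv b] at h
    rw [e13 a b] at h
    exact h
  -- Bswap: (a→b)' = b→a
  have bswap : ∀ a b : A, f (f a b) o = f b a := by
    intro a b
    exact (g2 a b).trans (a3 a b)
  -- E16p: a→(a'→c) = (a→a)→c
  have e16p : ∀ a c : A, f a (f (f a o) c) = f (f a a) c := by
    intro a c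
    have h := hA25 a o c
    rw [bswap a a] at h
    exact h
  -- NewI: (a→b)→c = (a→c')→(b→c)
  have newI : ∀ a b c : A, f (f a b) c = f (f a (f c o)) (f b c) := by
    intro a b c
    have h := hI a b c
    rw [bswap (f (f c o) a) (f (f b c) o)] at h
    rw [a24 (f b c) (f (f c o) a)] at h
    rw [bswap (f c o) a] at h
    exact h
  -- D12: z'→(x→z) = x→z
  have d12 : ∀ x z : A, f (f z o) (f x z) = f x z := by
    intro x z
    have h := e37 (f x o) (f z o)
    rw [g2 (f x o) (f z o)] at h
    rw [hInv x, hInv z] at h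
    exact h
  -- D7: ((y→y)→x)→z = (y→y)→(x→z)
  have d7 : ∀ y x z : A, f (f (f y y) x) z = f (f y y) (f x z) := by
    intro y x z
    have h := newI (f y y) x z
    rw [newI (f y y) (f z o) (f x z)] at h
    rw [d12 x z] at h
    rw [a2 (f y y) (f x z)] at h
    rw [bswap y y] at h
    rw [e26 (f y y) (f x z)] at h
    exact h
  -- D15: x→(y→z) = (z→y)→x'
  have d15 : ∀ x y z : A, f x (f y z) = f (f z y) (f x o) := by
    intro x y z
    have h := g2 x (f y z)
    rw [bswap y z] at h
    have h2 := congrArg (fun t => f t o) h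
    rw [hInv (f x (f y z))] at h2
    rw [bswap (f x o) (f z y)] at h2
    exact h2
  -- D16: x→(y→z) = (z→(y'→x))→(x→y')
  have d16 : ∀ x y z : A, f x (f y z) = f (f z (f (f y o) x)) (f x (f y o)) := by
    intro x y z
    have h := d15 x y z
    rw [newI z y (f x o)] at h
    rw [hInv x] at h
    rw [newI z x (f y (f x o))] at h
    rw [g2 y (f x o)] at h
    rw [hInv x] at h
    rw [a2 y x] at h
    rw [e38 x (f y o)] at h
    exact h
  -- D6g: x→(y→z) = y→(x→z)
  have d6g : ∀ x y z : A, f x (f y z) = f y (f x z) := by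
    intro x y z
    have h1 := d16 x y z
    have h2 := d16 y x z
    rw [a24 x y] at h2
    rw [a2 y x] at h2
    exact h1.trans h2.symm
  -- goal (c)
  have g3 : ∀ x y z : A, f x (f y (f (f y o) z)) = f y (f (f y x) z) := by
    intro x y z
    calc f x (f y (f (f y o) z))
      _ = f x (f (f y y) z) := by rw [e16p y z]
      _ = f (f y y) (f x z) := by rw [d6g x (f y y) z]
      _ = f (f (f y y) x) z := by rw [← d7 y x z]
      _ = f y (f (f y x) z) := by rw [← hA25 y x z]
  exact ⟨p2, g2, g3⟩
end

section
/- Let A be a symmetric implication zroupoid satisfying the identity (A₂₃): x → ((x → y) → z) ≈ (x → x) → (y → z). Then A satisfies the identity (F₂₅): x → ((y → z) → z) ≈ ((x → y) → z) → z. -/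
theorem stmt17 {A : Type*} (f : A → A → A) (o : A)
    (hI : ∀ x y z : A, f (f x y) z = f (f (f (f z o) x) (f (f y z) o)) o)
    (hI0 : f (f o o) o = o)
    (hInv : ∀ x : A, f (f x o) o = x)
    (hMC : ∀ x y : A, f (f x (f y o)) o = f (f y (f x o)) o)
    (hA23 : ∀ x y z : A, f x (f (f x y) z) = f (f x x) (f y z)) :
    ∀ x y z : A, f x (f (f y z) z) = f (f (f x y) z) z := by
  have E5 : ∀ v0 : A, (f (f v0 v0) o) = (f v0 (f (f v0 (f o o)) o)) := by
    intro v0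
    have h1 : (f (f v0 v0) (f (f o o) o)) = (f (f v0 v0) o) := by
      conv_lhs => rw [hI0]
    have h2 : (f (f v0 v0) (f (f o o) o)) = (f v0 (f (f v0 (f o o)) o)) := by
      conv_lhs => rw [← hA23 v0 (f o o) o]
    exact h1.symm.trans h2
  have E6 : ∀ v0 v1 : A, (f (f v0 v0) v1) = (f v0 (f (f v0 (f v1 o)) o)) := by
    intro v0 v1
    have h1 : (f (f v0 v0) (f (f v1 o) o)) = (f (f v0 v0) v1) := by
      conv_lhs => rw [hInv v1]
    have h2 : (f (f v0 v0) (f (f v1 o) o)) = (f v0 (f (f v0 (f v1 o)) o)) := by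
      conv_lhs => rw [← hA23 v0 (f v1 o) o]
    exact h1.symm.trans h2
  have E15 : ∀ v0 : A, (f (f o o) v0) = v0 := by
    intro v0
    have h1 : (f (f (f (f o o) v0) (f (f o o) o)) o) = (f (f o o) v0) := by
      conv_lhs => rw [hI0, hInv (f (f o o) v0)]
    have h2 : (f (f (f (f o o) v0) (f (f o o) o)) o) = v0 := by
      conv_lhs => rw [← hI v0 o o, hInv v0]
    exact h1.symm.trans h2
  have E18 : ∀ v0 v1 : A, (f (f v1 (f (f v0 v1) o)) o) = (f (f o v0) v1) := by
    intro v0 v1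
    have h1 : (f (f (f (f v1 o) o) (f (f v0 v1) o)) o) = (f (f v1 (f (f v0 v1) o)) o) := by
      conv_lhs => rw [hInv v1]
    have h2 : (f (f (f (f v1 o) o) (f (f v0 v1) o)) o) = (f (f o v0) v1) := by
      conv_lhs => rw [← hI o v0 v1]
    exact h1.symm.trans h2
  have E34 : ∀ v0 v1 : A, (f v0 v1) = (f o (f (f o v0) v1)) := by
    intro v0 v1
    have h1 : (f (f o o) (f v0 v1)) = (f v0 v1) := by
      conv_lhs => rw [E15 (f v0 v1)]
    have h2 : (f (f o o) (f v0 v1)) = (f o (f (f o v0) v1)) := by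
      conv_lhs => rw [← hA23 o v0 v1]
    exact h1.symm.trans h2
  have E36 : ∀ v0 : A, v0 = (f (f o (f (f o v0) o)) o) := by
    intro v0
    have h1 : (f (f o o) (f (f (f o o) (f v0 o)) o)) = v0 := by
      conv_lhs => rw [← E6 (f o o) v0, ← hA23 o o o, hI0, E15 v0]
    have h2 : (f (f o o) (f (f (f o o) (f v0 o)) o)) = (f (f o (f (f o v0) o)) o) := by
      conv_lhs => rw [E15 (f (f (f o o) (f v0 o)) o), ← hA23 o v0 o]
    exact h1.symm.trans h2
  have E48 : ∀ v0 v1 : A, (f (f (f o v0) v1) o) = (f v1 (f (f v0 v1) o)) := by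
    intro v0 v1
    have h1 : (f (f (f v1 (f (f v0 v1) o)) o) o) = (f (f (f o v0) v1) o) := by
      conv_lhs => rw [E18 v0 v1]
    have h2 : (f (f (f v1 (f (f v0 v1) o)) o) o) = (f v1 (f (f v0 v1) o)) := by
      conv_lhs => rw [hInv (f v1 (f (f v0 v1) o))]
    exact h1.symm.trans h2
  have E52 : (f o o) = (f (f o (f o o)) (f o o)) := by
    have h1 : (f (f (f o o) (f (f (f o o) (f o o)) o)) o) = (f o o) := by
      conv_lhs => rw [← E5 (f o o), hInv (f (f o o) (f o o)), ← hA23 o o o, hI0]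
    have h2 : (f (f (f o o) (f (f (f o o) (f o o)) o)) o) = (f (f o (f o o)) (f o o)) := by
      conv_lhs => rw [E18 (f o o) (f o o)]
    exact h1.symm.trans h2
  have E54 : ∀ v0 v1 : A, (f v0 (f (f o v1) v0)) = (f v0 (f (f v0 v1) v0)) := by
    intro v0 v1
    have h1 : (f v0 (f (f v0 (f (f v1 v0) o)) o)) = (f v0 (f (f o v1) v0)) := by
      conv_lhs => rw [E18 v1 v0]
    have h2 : (f v0 (f (f v0 (f (f v1 v0) o)) o)) = (f v0 (f (f v0 v1) v0)) := by
      conv_lhs => rw [← E6 v0 (f v1 v0), ← hA23 v0 v1 v0]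
    exact h1.symm.trans h2
  have E68 : o = (f o o) := by
    have h1 : (f (f (f o (f o o)) (f o o)) o) = o := by
      conv_lhs => rw [← E52, hI0]
    have h2 : (f (f (f o (f o o)) (f o o)) o) = (f o o) := by
      conv_lhs => rw [hMC (f o (f o o)) o, ← E5 o, hI0]
    exact h1.symm.trans h2
  have E74 : ∀ v0 v1 : A, (f o (f v0 v1)) = (f v0 v1) := by
    intro v0 v1
    have h1 : (f (f o o) (f v0 v1)) = (f o (f v0 v1)) := by
      conv_lhs => rw [← E68]
    have h2 : (f (f o o) (f v0 v1)) = (f v0 v1) := by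
      conv_lhs => rw [← hA23 o v0 v1, ← E34 v0 v1]
    exact h1.symm.trans h2
  have E75 : ∀ v0 : A, (f (f v0 v0) o) = (f v0 v0) := by
    intro v0
    have h1 : (f (f v0 v0) (f o o)) = (f (f v0 v0) o) := by
      conv_lhs => rw [← E68]
    have h2 : (f (f v0 v0) (f o o)) = (f v0 v0) := by
      conv_lhs => rw [← hA23 v0 o o, hInv v0]
    exact h1.symm.trans h2
  have E76 : ∀ v0 v1 : A, (f (f (f o v0) v1) o) = (f (f v0 v1) o) := by
    intro v0 v1
    have h1 : (f (f (f (f o o) v0) (f (f v1 o) o)) o) = (f (f (f o v0) v1) o) := by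
      conv_lhs => rw [← E68, hInv v1]
    have h2 : (f (f (f (f o o) v0) (f (f v1 o) o)) o) = (f (f v0 v1) o) := by
      conv_lhs => rw [← hI v0 v1 o]
    exact h1.symm.trans h2
  have E77 : ∀ v0 : A, (f o v0) = v0 := by
    intro v0
    have h1 : (f (f o o) v0) = (f o v0) := by
      conv_lhs => rw [← E68]
    have h2 : (f (f o o) v0) = v0 := by
      conv_lhs => rw [E15 v0]
    exact h1.symm.trans h2
  have E79 : ∀ v0 v1 : A, (f (f v0 v0) v1) = (f v0 (f (f v0 o) v1)) := by
    intro v0 v1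
    have h1 : (f (f v0 v0) (f o v1)) = (f (f v0 v0) v1) := by
      conv_lhs => rw [E77 v1]
    have h2 : (f (f v0 v0) (f o v1)) = (f v0 (f (f v0 o) v1)) := by
      conv_lhs => rw [← hA23 v0 o v1]
    exact h1.symm.trans h2
  have E81 : ∀ v0 : A, (f (f v0 (f v0 o)) o) = v0 := by
    intro v0
    have h1 : (f (f v0 (f (f o v0) o)) o) = (f (f v0 (f v0 o)) o) := by
      conv_lhs => rw [E77 v0]
    have h2 : (f (f v0 (f (f o v0) o)) o) = v0 := by
      conv_lhs => rw [E18 o v0, E15 v0]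
    exact h1.symm.trans h2
  have E85 : ∀ v0 : A, (f (f v0 o) (f v0 o)) = (f v0 v0) := by
    intro v0
    have h1 : (f (f (f v0 o) (f v0 o)) o) = (f (f v0 o) (f v0 o)) := by
      conv_lhs => rw [E75 (f v0 o)]
    have h2 : (f (f (f v0 o) (f v0 o)) o) = (f v0 v0) := by
      conv_lhs => rw [hMC (f v0 o) v0, hInv v0, E75 v0]
    exact h1.symm.trans h2
  have E91 : ∀ v0 : A, (f v0 o) = (f v0 (f v0 o)) := by
    intro v0
    have h1 : (f (f (f v0 (f v0 o)) o) o) = (f v0 o) := by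
      conv_lhs => rw [E81 v0]
    have h2 : (f (f (f v0 (f v0 o)) o) o) = (f v0 (f v0 o)) := by
      conv_lhs => rw [hInv (f v0 (f v0 o))]
    exact h1.symm.trans h2
  have E95 : ∀ v0 : A, (f v0 v0) = (f (f v0 v0) v0) := by
    intro v0
    have h1 : (f v0 (f (f v0 (f v0 o)) o)) = (f v0 v0) := by
      conv_lhs => rw [E81 v0]
    have h2 : (f v0 (f (f v0 (f v0 o)) o)) = (f (f v0 v0) v0) := by
      conv_lhs => rw [← E6 v0 v0]
    exact h1.symm.trans h2
  have E99 : ∀ v0 v1 : A, (f (f (f v1 v0) v1) o) = (f (f v0 v1) (f v1 o)) := by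
    intro v0 v1
    have h1 : (f (f (f (f (f v1 o) o) v0) (f (f v1 (f v1 o)) o)) o) = (f (f (f v1 v0) v1) o) := by
      conv_lhs => rw [E81 v1, hInv v1]
    have h2 : (f (f (f (f (f v1 o) o) v0) (f (f v1 (f v1 o)) o)) o) = (f (f v0 v1) (f v1 o)) := by
      conv_lhs => rw [← hI v0 v1 (f v1 o)]
    exact h1.symm.trans h2
  have E108 : ∀ v0 v1 : A, (f v0 v1) = (f (f v1 v0) v1) := by
    intro v0 v1
    have h1 : (f (f (f (f v1 o) (f (f v1 o) o)) (f (f v0 v1) o)) o) = (f v0 v1) := by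
      conv_lhs => rw [← E91 (f v1 o), hInv v1, E18 v0 v1, E77 v0]
    have h2 : (f (f (f (f v1 o) (f (f v1 o) o)) (f (f v0 v1) o)) o) = (f (f v1 v0) v1) := by
      conv_lhs => rw [← hI (f (f v1 o) o) v0 v1, hInv v1]
    exact h1.symm.trans h2
  have E116 : ∀ v0 v1 : A, (f (f v0 v1) v1) = (f (f v0 (f v1 v1)) v1) := by
    intro v0 v1
    have h1 : (f (f (f (f v1 o) v0) (f (f (f v1 v1) v1) o)) o) = (f (f v0 v1) v1) := by
      conv_lhs => rw [← E95 v1, ← hI v0 v1 v1]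
    have h2 : (f (f (f (f v1 o) v0) (f (f (f v1 v1) v1) o)) o) = (f (f v0 (f v1 v1)) v1) := by
      conv_lhs => rw [← hI v0 (f v1 v1) v1]
    exact h1.symm.trans h2
  have E122 : ∀ v0 v1 v2 : A, (f (f v0 v2) v1) = (f (f v0 (f v1 v2)) v1) := by
    intro v0 v1 v2
    have h1 : (f (f (f (f v1 o) v0) (f (f (f v1 v2) v1) o)) o) = (f (f v0 v2) v1) := by
      conv_lhs => rw [← E108 v2 v1, ← hI v0 v2 v1]
    have h2 : (f (f (f (f v1 o) v0) (f (f (f v1 v2) v1) o)) o) = (f (f v0 (f v1 v2)) v1) := by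
      conv_lhs => rw [← hI v0 (f v1 v2) v1]
    exact h1.symm.trans h2
  have E124 : ∀ v0 : A, (f v0 (f v0 v0)) = (f v0 v0) := by
    intro v0
    have h1 : (f (f (f v0 v0) o) (f v0 v0)) = (f v0 (f v0 v0)) := by
      conv_lhs => rw [E75 v0, ← hA23 v0 v0 v0, ← E95 v0]
    have h2 : (f (f (f v0 v0) o) (f v0 v0)) = (f v0 v0) := by
      conv_lhs => rw [← E108 o (f v0 v0), E77 (f v0 v0)]
    exact h1.symm.trans h2
  have E125 : ∀ v0 v1 : A, (f (f v1 v0) (f v0 v1)) = (f v0 (f v0 v1)) := by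
    intro v0 v1
    have h1 : (f (f (f v0 v1) v0) (f v0 v1)) = (f (f v1 v0) (f v0 v1)) := by
      conv_lhs => rw [← E108 v1 v0]
    have h2 : (f (f (f v0 v1) v0) (f v0 v1)) = (f v0 (f v0 v1)) := by
      conv_lhs => rw [← E108 v0 (f v0 v1)]
    exact h1.symm.trans h2
  have E143 : ∀ v0 v1 : A, (f (f v1 o) (f v1 v0)) = (f (f v1 v1) v0) := by
    intro v0 v1
    have h1 : (f (f v1 o) (f (f (f v1 o) o) v0)) = (f (f v1 o) (f v1 v0)) := by
      conv_lhs => rw [hInv v1]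
    have h2 : (f (f v1 o) (f (f (f v1 o) o) v0)) = (f (f v1 v1) v0) := by
      conv_lhs => rw [← E79 (f v1 o) v0, E85 v1]
    exact h1.symm.trans h2
  have E144 : ∀ v0 v1 : A, (f (f v0 v0) v1) = (f v0 (f (f v0 v0) v1)) := by
    intro v0 v1
    have h1 : (f (f v0 v0) (f (f (f v0 v0) o) v1)) = (f (f v0 v0) v1) := by
      conv_lhs => rw [← E79 (f v0 v0) v1, ← hA23 v0 v0 v0, ← E95 v0, E124 v0]
    have h2 : (f (f v0 v0) (f (f (f v0 v0) o) v1)) = (f v0 (f (f v0 v0) v1)) := by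
      conv_lhs => rw [← hA23 v0 (f (f v0 v0) o) v1, E75 v0, E124 v0]
    exact h1.symm.trans h2
  have E216 : ∀ v0 v1 : A, (f v1 (f v0 v0)) = (f (f v0 v1) (f v0 v0)) := by
    intro v0 v1
    have h1 : (f (f v0 (f (f v0 v0) v1)) (f v0 v0)) = (f v1 (f v0 v0)) := by
      conv_lhs => rw [← E144 v0 v1, ← E108 v1 (f v0 v0)]
    have h2 : (f (f v0 (f (f v0 v0) v1)) (f v0 v0)) = (f (f v0 v1) (f v0 v0)) := by
      conv_lhs => rw [← E122 v0 (f v0 v0) v1]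
    exact h1.symm.trans h2
  have E259 : ∀ v0 v1 : A, (f (f v1 v0) o) = (f v0 (f (f v1 v0) o)) := by
    intro v0 v1
    have h1 : (f o (f (f o v0) (f (f v1 (f o v0)) o))) = (f (f v1 v0) o) := by
      conv_lhs => rw [← E48 v1 (f o v0), E77 (f (f (f o v1) (f o v0)) o), E77 v1, E77 v0]
    have h2 : (f o (f (f o v0) (f (f v1 (f o v0)) o))) = (f v0 (f (f v1 v0) o)) := by
      conv_lhs => rw [← E34 v0 (f (f v1 (f o v0)) o), E77 v0]
    exact h1.symm.trans h2
  have E284 : ∀ v0 v1 : A, (f v0 v1) = (f (f v1 o) (f v0 v1)) := by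
    intro v0 v1
    have h1 : (f (f (f (f v1 (f (f v0 v1) o)) o) (f v1 (f (f v0 v1) o))) o) = (f v0 v1) := by
      conv_lhs => rw [E18 v0 v1, E77 v0, ← E259 v1 v0, E81 (f v0 v1)]
    have h2 : (f (f (f (f v1 (f (f v0 v1) o)) o) (f v1 (f (f v0 v1) o))) o) = (f (f v1 o) (f v0 v1)) := by
      conv_lhs => rw [E99 o (f v1 (f (f v0 v1) o)), E18 v0 v1, E77 (f v1 (f (f v0 v1) o)), E77 v0, ← E122 v1 (f v0 v1) o]
    exact h1.symm.trans h2
  have E285 : ∀ v0 v1 : A, (f (f v0 v1) (f v1 o)) = (f (f v0 v1) o) := by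
    intro v0 v1
    have h1 : (f o (f (f (f v1 v0) v1) o)) = (f (f v0 v1) (f v1 o)) := by
      conv_lhs => rw [E99 v0 v1, E77 (f (f v0 v1) (f v1 o))]
    have h2 : (f o (f (f (f v1 v0) v1) o)) = (f (f v0 v1) o) := by
      conv_lhs => rw [E74 (f (f v1 v0) v1) o, ← E108 v0 v1]
    exact h1.symm.trans h2
  have E306 : ∀ v0 v1 : A, (f v0 (f v1 (f v0 v0))) = (f v1 (f v0 v0)) := by
    intro v0 v1
    have h1 : (f (f (f v0 v0) o) (f v1 (f v0 v0))) = (f v0 (f v1 (f v0 v0))) := by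
      conv_lhs => rw [E75 v0, ← hA23 v0 v1 (f v0 v0), ← E216 v0 v1]
    have h2 : (f (f (f v0 v0) o) (f v1 (f v0 v0))) = (f v1 (f v0 v0)) := by
      conv_lhs => rw [← E284 v1 (f v0 v0)]
    exact h1.symm.trans h2
  have E307 : ∀ v0 v1 : A, (f v1 (f v0 v1)) = (f (f (f v1 o) v0) v1) := by
    intro v0 v1
    have h1 : (f (f (f v1 o) o) (f (f v1 o) (f v0 v1))) = (f v1 (f v0 v1)) := by
      conv_lhs => rw [← E284 v0 v1, hInv v1]
    have h2 : (f (f (f v1 o) o) (f (f v1 o) (f v0 v1))) = (f (f (f v1 o) v0) v1) := by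
      conv_lhs => rw [E143 (f v0 v1) (f v1 o), ← hA23 (f v1 o) v0 v1, ← E284 (f (f v1 o) v0) v1]
    exact h1.symm.trans h2
  have E309 : ∀ v0 v1 : A, (f v0 v1) = (f (f (f v0 v1) o) v1) := by
    intro v0 v1
    have h1 : (f (f (f (f v1 o) (f v0 v1)) (f v1 o)) o) = (f v0 v1) := by
      conv_lhs => rw [← E284 v0 v1, hMC (f v0 v1) v1, E18 v0 v1, E77 v0]
    have h2 : (f (f (f (f v1 o) (f v0 v1)) (f v1 o)) o) = (f (f (f v0 v1) o) v1) := by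
      conv_lhs => rw [E99 (f v0 v1) (f v1 o), hInv v1, ← E122 (f v0 v1) v1 o]
    exact h1.symm.trans h2
  have E316 : ∀ v0 v1 v2 : A, (f v1 (f v2 v0)) = (f (f v0 v1) (f v2 v0)) := by
    intro v0 v1 v2
    have h1 : (f (f (f (f (f v2 v0) o) v0) (f (f v1 (f v2 v0)) o)) o) = (f v1 (f v2 v0)) := by
      conv_lhs => rw [← E309 v2 v0, E18 v1 (f v2 v0), E77 v1]
    have h2 : (f (f (f (f (f v2 v0) o) v0) (f (f v1 (f v2 v0)) o)) o) = (f (f v0 v1) (f v2 v0)) := by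
      conv_lhs => rw [← hI v0 v1 (f v2 v0)]
    exact h1.symm.trans h2
  have E328 : ∀ v0 v1 : A, (f (f v0 o) v1) = (f (f v0 (f v1 o)) o) := by
    intro v0 v1
    have h1 : (f (f v0 (f o (f (f o v1) o))) (f (f o (f (f o v1) o)) o)) = (f (f v0 o) v1) := by
      conv_lhs => rw [← E36 v1, ← E34 v1 o, ← E122 v0 v1 o]
    have h2 : (f (f v0 (f o (f (f o v1) o))) (f (f o (f (f o v1) o)) o)) = (f (f v0 (f v1 o)) o) := by
      conv_lhs => rw [E285 v0 (f o (f (f o v1) o)), ← E34 v1 o]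
    exact h1.symm.trans h2
  have E404 : ∀ v0 v1 : A, (f (f v0 v1) o) = (f (f v0 o) (f v1 o)) := by
    intro v0 v1
    have h1 : (f (f v0 (f (f v1 (f v1 o)) o)) o) = (f (f v0 v1) o) := by
      conv_lhs => rw [E81 v1]
    have h2 : (f (f v0 (f (f v1 (f v1 o)) o)) o) = (f (f v0 o) (f v1 o)) := by
      conv_lhs => rw [← E328 v0 (f v1 (f v1 o)), ← E91 v1]
    exact h1.symm.trans h2
  have E470 : ∀ v0 v1 v2 : A, (f v2 (f v0 v1)) = (f (f (f v2 o) v0) v1) := by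
    intro v0 v1 v2
    have h1 : (f (f (f (f v1 o) (f v2 o)) (f (f v0 v1) o)) o) = (f v2 (f v0 v1)) := by
      conv_lhs => rw [← E404 v1 v2, ← E328 (f (f v1 v2) o) (f v0 v1), hInv (f v1 v2), ← E316 v1 v2 v0]
    have h2 : (f (f (f (f v1 o) (f v2 o)) (f (f v0 v1) o)) o) = (f (f (f v2 o) v0) v1) := by
      conv_lhs => rw [← hI (f v2 o) v0 v1]
    exact h1.symm.trans h2
  have E474 : ∀ v0 v1 : A, (f (f v0 (f v0 v1)) o) = (f v1 v0) := by
    intro v0 v1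
    have h1 : (f (f (f (f v0 o) (f v1 o)) (f v0 o)) o) = (f (f v0 (f v0 v1)) o) := by
      conv_lhs => rw [← E404 v0 v1, hMC (f (f v0 v1) o) v0, hInv (f v0 v1)]
    have h2 : (f (f (f (f v0 o) (f v1 o)) (f v0 o)) o) = (f v1 v0) := by
      conv_lhs => rw [E99 (f v1 o) (f v0 o), hInv v0, ← E122 (f v1 o) v0 o, hInv v1]
    exact h1.symm.trans h2
  have E477 : ∀ v0 v1 : A, (f (f v1 v0) o) = (f v0 (f v0 v1)) := by
    intro v0 v1
    have h1 : (f (f (f v0 (f v0 v1)) o) o) = (f (f v1 v0) o) := by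
      conv_lhs => rw [E474 v0 v1]
    have h2 : (f (f (f v0 (f v0 v1)) o) o) = (f v0 (f v0 v1)) := by
      conv_lhs => rw [hInv (f v0 (f v0 v1))]
    exact h1.symm.trans h2
  have E485 : ∀ v0 v1 : A, (f v0 v1) = (f v0 (f v0 v1)) := by
    intro v0 v1
    have h1 : (f (f (f v0 v1) (f (f v0 (f v0 v1)) o)) o) = (f v0 v1) := by
      conv_lhs => rw [E474 v0 v1, E125 v1 v0, E474 v1 v0]
    have h2 : (f (f (f v0 v1) (f (f v0 (f v0 v1)) o)) o) = (f v0 (f v0 v1)) := by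
      conv_lhs => rw [E18 v0 (f v0 v1), E77 v0]
    exact h1.symm.trans h2
  have E517 : ∀ v0 v1 : A, (f (f v0 v1) o) = (f v1 v0) := by
    intro v0 v1
    have h1 : (f (f (f o v0) (f (f o v0) v1)) o) = (f (f v0 v1) o) := by
      conv_lhs => rw [← E485 (f o v0) v1, E77 v0]
    have h2 : (f (f (f o v0) (f (f o v0) v1)) o) = (f v1 v0) := by
      conv_lhs => rw [E76 v0 (f (f o v0) v1), E77 v0, E474 v0 v1]
    exact h1.symm.trans h2
  have E529 : ∀ v0 v1 v2 : A, (f (f v0 o) (f v2 v1)) = (f (f v1 v2) v0) := by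
    intro v0 v1 v2
    have h1 : (f (f (f (f o o) v0) (f (f (f v1 v2) o) o)) o) = (f (f v0 o) (f v2 v1)) := by
      conv_lhs => rw [E517 v1 v2, E15 v0, ← E328 v0 (f v2 v1)]
    have h2 : (f (f (f (f o o) v0) (f (f (f v1 v2) o) o)) o) = (f (f v1 v2) v0) := by
      conv_lhs => rw [← hI v0 (f v1 v2) o, E517 v0 (f v1 v2)]
    exact h1.symm.trans h2
  have E534 : ∀ v0 v1 v2 : A, (f v2 (f v0 v1)) = (f v2 (f v0 (f v2 v1))) := by
    intro v0 v1 v2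
    have h1 : (f (f (f v0 (f v2 v1)) v2) o) = (f v2 (f v0 v1)) := by
      conv_lhs => rw [← E122 v0 v2 v1, E517 (f v0 v1) v2]
    have h2 : (f (f (f v0 (f v2 v1)) v2) o) = (f v2 (f v0 (f v2 v1))) := by
      conv_lhs => rw [E517 (f v0 (f v2 v1)) v2]
    exact h1.symm.trans h2
  have E539 : ∀ v0 v1 : A, (f (f v0 v0) v1) = (f (f v1 v0) v0) := by
    intro v0 v1
    have h1 : (f (f v0 (f v1 (f v0 v0))) o) = (f (f v0 v0) v1) := by
      conv_lhs => rw [E306 v0 v1, E517 v1 (f v0 v0)]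
    have h2 : (f (f v0 (f v1 (f v0 v0))) o) = (f (f v1 v0) v0) := by
      conv_lhs => rw [E517 v0 (f v1 (f v0 v0)), ← E116 v1 v0]
    exact h1.symm.trans h2
  have E588 : ∀ v0 v1 v2 : A, (f (f v2 v0) v1) = (f (f v2 o) (f v0 v1)) := by
    intro v0 v1 v2
    have h1 : (f (f (f (f v2 o) o) v0) v1) = (f (f v2 v0) v1) := by
      conv_lhs => rw [hInv v2]
    have h2 : (f (f (f (f v2 o) o) v0) v1) = (f (f v2 o) (f v0 v1)) := by
      conv_lhs => rw [← E470 v0 v1 (f v2 o)]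
    exact h1.symm.trans h2
  have E643 : ∀ v0 v1 v2 : A, (f v2 (f v1 v0)) = (f v1 (f v2 v0)) := by
    intro v0 v1 v2
    have h1 : (f (f (f v1 o) (f (f v1 o) v2)) v0) = (f v2 (f v1 v0)) := by
      conv_lhs => rw [← E477 (f v1 o) v2, ← E328 v2 v1, ← E470 v1 v0 v2]
    have h2 : (f (f (f v1 o) (f (f v1 o) v2)) v0) = (f v1 (f v2 v0)) := by
      conv_lhs => rw [← E470 (f (f v1 o) v2) v0 v1, ← E470 v2 v0 v1, ← E485 v1 (f v2 v0)]
    exact h1.symm.trans h2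
  have E760 : ∀ v0 v1 v2 : A, (f (f (f v1 v2) v0) v0) = (f v0 (f (f v2 v1) v0)) := by
    intro v0 v1 v2
    have h1 : (f (f v0 o) (f (f (f v0 o) (f v2 v1)) (f v0 o))) = (f (f (f v1 v2) v0) v0) := by
      conv_lhs => rw [E529 v0 v1 v2, E285 (f v1 v2) v0, ← E404 v0 (f (f v1 v2) v0), E517 v0 (f (f v1 v2) v0)]
    have h2 : (f (f v0 o) (f (f (f v0 o) (f v2 v1)) (f v0 o))) = (f v0 (f (f v2 v1) v0)) := by
      conv_lhs => rw [← E54 (f v0 o) (f v2 v1), E77 (f v2 v1), E529 v0 (f v0 o) (f v2 v1), ← E307 (f v2 v1) v0]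
    exact h1.symm.trans h2
  have E788 : ∀ v0 v1 v2 : A, (f (f v0 v2) v1) = (f (f v1 v2) v0) := by
    intro v0 v1 v2
    have h1 : (f (f v0 (f v1 (f v0 v2))) (f (f v1 (f v0 v2)) o)) = (f (f v0 v2) v1) := by
      conv_lhs => rw [← E534 v1 v2 v0, E517 v1 (f v0 v2), E643 v1 (f v0 v2) (f v0 (f v1 v2)), ← E122 v0 v1 v2, ← E485 (f v0 v2) v1]
    have h2 : (f (f v0 (f v1 (f v0 v2))) (f (f v1 (f v0 v2)) o)) = (f (f v1 v2) v0) := by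
      conv_lhs => rw [E285 v0 (f v1 (f v0 v2)), E517 v0 (f v1 (f v0 v2)), ← E122 v1 v0 v2]
    exact h1.symm.trans h2
  have E957 : ∀ v0 v1 v2 v3 : A, (f (f (f v3 v1) v2) v0) = (f v3 (f (f v1 v2) v0)) := by
    intro v0 v1 v2 v3
    have h1 : (f (f (f v3 o) (f v1 v2)) v0) = (f (f (f v3 v1) v2) v0) := by
      conv_lhs => rw [← E588 v1 v2 v3]
    have h2 : (f (f (f v3 o) (f v1 v2)) v0) = (f v3 (f (f v1 v2) v0)) := by
      conv_lhs => rw [← E470 (f v1 v2) v0 v3]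
    exact h1.symm.trans h2
  have E3670 : ∀ v0 v1 v2 : A, (f v1 (f (f v2 v0) v0)) = (f v0 (f (f v2 v1) v0)) := by
    intro v0 v1 v2
    have h1 : (f (f (f v1 v2) v0) v0) = (f v1 (f (f v2 v0) v0)) := by
      conv_lhs => rw [E957 v0 v2 v0 v1]
    have h2 : (f (f (f v1 v2) v0) v0) = (f v0 (f (f v2 v1) v0)) := by
      conv_lhs => rw [E760 v0 v1 v2]
    exact h1.symm.trans h2
  intro x y z
  conv_rhs => rw [← E539 z (f x y), ← hA23 z x y, E788 z y x, ← E3670 z x y]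
end

section
/- Let A be a symmetric implication zroupoid satisfying the identity (A₁₂): x → (x → (y → z)) ≈ x → ((x → y) → z). Then A satisfies the identity (F₂₅): x → ((y → z) → z) ≈ ((x → y) → z) → z. -/
theorem stmt18 {A : Type*} (f : A → A → A) (o : A)
    (hI : ∀ x y z : A, f (f x y) z = f (f (f (f z o) x) (f (f y z) o)) o)
    (hI0 : f (f o o) o = o)
    (hInv : ∀ x : A, f (f x o) o = x)
    (hMC : ∀ x y : A, f (f x (f y o)) o = f (f y (f x o)) o)
    (hA12 : ∀ x y z : A, f x (f x (f y z)) = f x (f (f x y) z)) :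
    ∀ x y z : A, f x (f (f y z) z) = f (f (f x y) z) z := by
  have l6 : ∀ x : A, (f (f o x) x) = x := by
    intro x
    calc (f (f o x) x)
      _ = (f (f (f (f x o) o) (f (f x x) o)) o) := by conv_lhs => rw [hI o x x]
      _ = (f (f x (f (f x x) o)) o) := by conv_lhs => rw [hInv x]
      _ = (f (f x (f x (f x o))) o) := by conv_lhs => rw [← hA12 x x o]
      _ = (f (f x (f (f (f x (f x o)) o) o)) o) := by conv_lhs => rw [← hInv (f x (f x o))]
      _ = (f (f x (f (f (f (f (f o o) x) (f (f (f x o) o) o)) o) o)) o) := by conv_lhs => rw [hI x (f x o) o]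
      _ = (f (f x (f (f (f (f (f x o) o) (f (f (f o o) x) o)) o) o)) o) := by conv_lhs => rw [← hMC (f (f x o) o) (f (f o o) x)]
      _ = (f (f x (f (f (f o (f o o)) x) o)) o) := by conv_lhs => rw [← hI o (f o o) x]
      _ = (f (f (f (f x o) o) (f (f (f o (f o o)) x) o)) o) := (show (f (f (f (f x o) o) (f (f (f o (f o o)) x) o)) o) = (f (f x (f (f (f o (f o o)) x) o)) o) by conv_lhs => rw [hInv x]).symm
      _ = (f (f o (f o (f o o))) x) := by conv_lhs => rw [← hI o (f o (f o o)) x]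
      _ = (f (f o (f (f o o) o)) x) := by conv_lhs => rw [hA12 o o o]
      _ = (f (f (f (f o (f (f o o) o)) o) o) x) := by conv_lhs => rw [← hInv (f o (f (f o o) o))]
      _ = (f (f (f (f (f o o) (f o o)) o) o) x) := by conv_lhs => rw [hMC o (f o o)]
      _ = (f (f (f o o) (f o o)) x) := by conv_lhs => rw [hInv (f (f o o) (f o o))]
      _ = (f (f (f o o) (f o o)) (f (f x o) o)) := by conv_lhs => rw [← hInv x]
      _ = (f (f (f (f (f o o) (f o o)) (f (f x o) o)) o) o) := by conv_lhs => rw [← hInv (f (f (f o o) (f o o)) (f (f x o) o))]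
      _ = (f (f (f (f o o) x) o) o) := by conv_lhs => rw [← hI (f o o) x o]
      _ = (f (f (f (f o o) x) (f (f o o) o)) o) := (show (f (f (f (f o o) x) (f (f o o) o)) o) = (f (f (f (f o o) x) o) o) by conv_lhs => rw [hInv o]).symm
      _ = (f (f x o) o) := by conv_lhs => rw [← hI x o o]
      _ = x := by conv_lhs => rw [hInv x]
  have l4 : ∀ x : A, (f (f x o) x) = x := by
    intro x
    calc (f (f x o) x)
      _ = (f (f (f (f x o) o) o) (f (f x o) o)) := by conv_lhs => rw [← hInv x]
      _ = (f (f x o) (f (f x o) o)) := by conv_lhs => rw [hInv (f x o)]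
      _ = (f (f x o) (f (f x o) (f (f o o) o))) := (show (f (f x o) (f (f x o) (f (f o o) o))) = (f (f x o) (f (f x o) o)) by conv_lhs => rw [l6 o]).symm
      _ = (f (f x o) (f (f (f x o) (f o o)) o)) := by conv_lhs => rw [hA12 (f x o) (f o o) o]
      _ = (f (f x o) (f (f o (f (f x o) o)) o)) := by conv_lhs => rw [hMC (f x o) o]
      _ = (f (f (f (f x o) (f (f o (f (f x o) o)) o)) o) o) := by conv_lhs => rw [← hInv (f (f x o) (f (f o (f (f x o) o)) o))]
      _ = (f (f (f (f o (f (f x o) o)) (f (f x o) o)) o) o) := by conv_lhs => rw [hMC (f x o) (f o (f (f x o) o))]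
      _ = (f (f (f (f x o) o) o) o) := by conv_lhs => rw [l6 (f (f x o) o)]
      _ = (f (f x o) o) := by conv_lhs => rw [hInv x]
      _ = x := by conv_lhs => rw [hInv x]
  have l1 : ∀ x : A, (f (f o o) x) = x := by
    intro x
    calc (f (f o o) x)
      _ = (f (f (f (f o o) x) o) o) := by conv_lhs => rw [← hInv (f (f o o) x)]
      _ = (f (f (f (f o o) x) (f (f o o) o)) o) := (show (f (f (f (f o o) x) (f (f o o) o)) o) = (f (f (f (f o o) x) o) o) by conv_lhs => rw [l4 o]).symm
      _ = (f (f x o) o) := by conv_lhs => rw [← hI x o o]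
      _ = x := by conv_lhs => rw [hInv x]
  have l5 : ∀ x : A, (f (f x x) x) = x := by
    intro x
    calc (f (f x x) x)
      _ = (f (f (f (f x o) x) (f (f x x) o)) o) := by conv_lhs => rw [hI x x x]
      _ = (f (f x (f (f x x) o)) o) := by conv_lhs => rw [l4 x]
      _ = (f (f (f (f x o) o) (f (f x x) o)) o) := (show (f (f (f (f x o) o) (f (f x x) o)) o) = (f (f x (f (f x x) o)) o) by conv_lhs => rw [hInv x]).symm
      _ = (f (f o x) x) := by conv_lhs => rw [← hI o x x]
      _ = x := by conv_lhs => rw [l6 x]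
  have l2 : ∀ x : A, (f o x) = (f x x) := by
    intro x
    calc (f o x)
      _ = (f (f (f o o) o) x) := by conv_lhs => rw [← l5 o]
      _ = (f (f (f (f x o) (f o o)) (f (f o x) o)) o) := by conv_lhs => rw [hI (f o o) o x]
      _ = (f (f (f o x) (f (f (f x o) (f o o)) o)) o) := by conv_lhs => rw [← hMC (f o x) (f (f x o) (f o o))]
      _ = (f (f (f o x) (f (f o (f (f x o) o)) o)) o) := by conv_lhs => rw [← hMC o (f x o)]
      _ = (f (f (f o (f (f x o) o)) (f (f o x) o)) o) := by conv_lhs => rw [← hMC (f o (f (f x o) o)) (f o x)]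
      _ = (f (f (f (f (f (f (f o x) o) o) o) (f (f (f (f x o) o) (f (f o x) o)) o)) o) o) := by conv_lhs => rw [hI o (f (f x o) o) (f (f o x) o)]
      _ = (f (f (f (f (f (f (f o x) o) o) o) (f (f o o) x)) o) o) := by conv_lhs => rw [← hI o o x]
      _ = (f (f (f (f (f o x) o) o) o) (f (f o o) x)) := by conv_lhs => rw [hInv (f (f (f (f (f o x) o) o) o) (f (f o o) x))]
      _ = (f (f (f o x) o) (f (f o o) x)) := by conv_lhs => rw [hInv (f (f o x) o)]
      _ = (f (f (f o x) o) (f (f o o) (f (f x o) o))) := (show (f (f (f o x) o) (f (f o o) (f (f x o) o))) = (f (f (f o x) o) (f (f o o) x)) by conv_lhs => rw [hInv x]).symm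
      _ = (f (f (f o x) o) (f (f x o) o)) := by conv_lhs => rw [l1 (f (f x o) o)]
      _ = (f (f (f (f (f o x) o) (f (f x o) o)) o) o) := by conv_lhs => rw [← hInv (f (f (f o x) o) (f (f x o) o))]
      _ = (f (f (f (f x o) (f (f (f o x) o) o)) o) o) := by conv_lhs => rw [hMC (f (f o x) o) (f x o)]
      _ = (f (f x o) (f (f (f o x) o) o)) := by conv_lhs => rw [hInv (f (f x o) (f (f (f o x) o) o))]
      _ = (f (f x o) (f (f (f o (f (f x o) o)) o) o)) := (show (f (f x o) (f (f (f o (f (f x o) o)) o) o)) = (f (f x o) (f (f (f o x) o) o)) by conv_lhs => rw [hInv x]).symm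
      _ = (f (f x o) (f (f (f (f x o) (f o o)) o) o)) := by conv_lhs => rw [hMC o (f x o)]
      _ = (f (f x o) (f (f x o) (f o o))) := by conv_lhs => rw [hInv (f (f x o) (f o o))]
      _ = (f (f x o) (f (f (f x o) o) o)) := by conv_lhs => rw [hA12 (f x o) o o]
      _ = (f (f (f (f x o) (f (f (f x o) o) o)) o) o) := by conv_lhs => rw [← hInv (f (f x o) (f (f (f x o) o) o))]
      _ = (f (f (f (f (f x o) o) (f (f x o) o)) o) o) := by conv_lhs => rw [hMC (f x o) (f (f x o) o)]
      _ = (f (f (f x x) o) o) := by conv_lhs => rw [hInv x]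
      _ = (f x x) := by conv_lhs => rw [hInv (f x x)]
  have lK : ∀ x y : A, (f x (f x y)) = (f x y) := by
    intro x y
    calc (f x (f x y))
      _ = (f x (f x (f (f y o) o))) := by conv_lhs => rw [← hInv y]
      _ = (f x (f (f x (f y o)) o)) := by conv_lhs => rw [hA12 x (f y o) o]
      _ = (f x (f (f y (f x o)) o)) := by conv_lhs => rw [← hMC y x]
      _ = (f (f (f x (f (f y (f x o)) o)) o) o) := by conv_lhs => rw [← hInv (f x (f (f y (f x o)) o))]
      _ = (f (f (f (f y (f x o)) (f x o)) o) o) := by conv_lhs => rw [← hMC (f y (f x o)) x]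
      _ = (f (f y (f x o)) (f x o)) := by conv_lhs => rw [hInv (f (f y (f x o)) (f x o))]
      _ = (f (f (f (f (f x o) o) y) (f (f (f x o) (f x o)) o)) o) := by conv_lhs => rw [hI y (f x o) (f x o)]
      _ = (f (f (f (f (f x o) o) y) (f (f o (f x o)) o)) o) := by conv_lhs => rw [← l2 (f x o)]
      _ = (f (f y o) (f x o)) := by conv_lhs => rw [← hI y o (f x o)]
      _ = (f (f (f (f y o) (f x o)) o) o) := by conv_lhs => rw [← hInv (f (f y o) (f x o))]
      _ = (f (f (f x (f (f y o) o)) o) o) := by conv_lhs => rw [hMC (f y o) x]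
      _ = (f (f (f x y) o) o) := by conv_lhs => rw [hInv y]
      _ = (f x y) := by conv_lhs => rw [hInv (f x y)]
  have lP : ∀ x y z : A, (f x (f y z)) = (f x (f (f x y) z)) := by
    intro x y z
    calc (f x (f y z))
      _ = (f x (f x (f y z))) := by conv_lhs => rw [← lK x (f y z)]
      _ = (f x (f (f x y) z)) := by conv_lhs => rw [hA12 x y z]
  have lU : ∀ x y : A, (f x (f y o)) = (f y (f x o)) := by
    intro x y
    calc (f x (f y o))
      _ = (f (f (f x (f y o)) o) o) := by conv_lhs => rw [← hInv (f x (f y o))]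
      _ = (f (f (f y (f x o)) o) o) := by conv_lhs => rw [← hMC y x]
      _ = (f y (f x o)) := by conv_lhs => rw [hInv (f y (f x o))]
  have lV : ∀ x y : A, (f (f x o) y) = (f (f y o) x) := by
    intro x y
    calc (f (f x o) y)
      _ = (f (f x o) (f (f y o) o)) := by conv_lhs => rw [← hInv y]
      _ = (f (f y o) (f (f x o) o)) := by conv_lhs => rw [← lU (f y o) (f x o)]
      _ = (f (f y o) x) := by conv_lhs => rw [hInv x]
  have lC : ∀ x y : A, (f x y) = (f (f y o) (f x o)) := by
    intro x y
    calc (f x y)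
      _ = (f x (f (f y o) o)) := by conv_lhs => rw [← hInv y]
      _ = (f (f y o) (f x o)) := by conv_lhs => rw [lU x (f y o)]
  have n1 : ∀ a b : A, (f a b) = (f a (f a b)) := by
    intro a b
    calc (f a b)
      _ = (f a (f a b)) := by conv_lhs => rw [← lK a b]
  have n15 : ∀ a b : A, (f a b) = (f (f b o) (f a o)) := by
    intro a b
    calc (f a b)
      _ = (f (f b o) (f a o)) := by conv_lhs => rw [lC a b]
  have n16 : ∀ a b : A, (f a b) = (f (f b o) (f a b)) := by
    intro a b
    calc (f a b)
      _ = (f (f b o) (f a o)) := by conv_lhs => rw [n15 a b]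
      _ = (f (f b o) (f (f b o) (f a o))) := by conv_lhs => rw [n1 (f b o) (f a o)]
      _ = (f (f b o) (f a b)) := by conv_lhs => rw [← n15 a b]
  have n22 : ∀ a b : A, (f a b) = (f (f (f a o) o) b) := by
    intro a b
    calc (f a b)
      _ = (f (f (f a o) o) b) := by conv_lhs => rw [← hInv a]
  have n24 : ∀ a b : A, (f a b) = (f (f (f a o) b) b) := by
    intro a b
    calc (f a b)
      _ = (f (f b o) (f a o)) := by conv_lhs => rw [n15 a b]
      _ = (f (f b o) (f (f (f b o) a) o)) := by conv_lhs => rw [lP (f b o) a o]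
      _ = (f (f (f b o) a) b) := by conv_lhs => rw [← n15 (f (f b o) a) b]
      _ = (f (f (f a o) b) b) := by conv_lhs => rw [lV b a]
  have n27 : ∀ a b : A, (f a b) = (f (f (f a b) o) b) := by
    intro a b
    calc (f a b)
      _ = (f (f b o) (f a b)) := by conv_lhs => rw [n16 a b]
      _ = (f (f (f a b) o) b) := by conv_lhs => rw [lV b (f a b)]
  have n44 : ∀ a b : A, (f (f a o) b) = (f (f a b) b) := by
    intro a b
    calc (f (f a o) b)
      _ = (f (f (f (f a o) o) b) b) := by conv_lhs => rw [n24 (f a o) b]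
      _ = (f (f a b) b) := by conv_lhs => rw [← n22 a b]
  have n45 : ∀ a b : A, (f (f a o) b) = (f (f b o) a) := by
    intro a b
    calc (f (f a o) b)
      _ = (f (f b o) a) := by conv_lhs => rw [← lV b a]
  have n156 : ∀ a b : A, (f a (f b o)) = (f a (f (f a b) o)) := by
    intro a b
    calc (f a (f b o))
      _ = (f a (f (f a b) o)) := by conv_lhs => rw [lP a b o]
  have n163 : ∀ a b c : A, (f a (f b c)) = (f a (f a (f b c))) := by
    intro a b c
    calc (f a (f b c))
      _ = (f a (f a (f b c))) := by conv_lhs => rw [n1 a (f b c)]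
  have n164 : ∀ a b c : A, (f a (f b c)) = (f a (f b (f a c))) := by
    intro a b c
    calc (f a (f b c))
      _ = (f a (f (f c o) (f b o))) := by conv_lhs => rw [n15 b c]
      _ = (f a (f (f a (f c o)) (f b o))) := by conv_lhs => rw [lP a (f c o) (f b o)]
      _ = (f a (f (f a (f (f a c) o)) (f b o))) := by conv_lhs => rw [n156 a c]
      _ = (f a (f (f (f a c) o) (f b o))) := by conv_lhs => rw [← lP a (f (f a c) o) (f b o)]
      _ = (f a (f b (f a c))) := by conv_lhs => rw [← n15 b (f a c)]
  have n165 : ∀ a b c : A, (f a (f b c)) = (f a (f b (f b c))) := by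
    intro a b c
    calc (f a (f b c))
      _ = (f a (f b (f b c))) := by conv_lhs => rw [n1 b c]
  have n167 : ∀ a b c : A, (f a (f b c)) = (f b (f a (f a c))) := by
    intro a b c
    calc (f a (f b c))
      _ = (f a (f b (f a c))) := by conv_lhs => rw [n164 a b c]
      _ = (f (f (f b (f a c)) o) (f a (f b (f a c)))) := by conv_lhs => rw [n16 a (f b (f a c))]
      _ = (f (f (f b (f a c)) o) (f a (f b c))) := by conv_lhs => rw [← n164 a b c]
      _ = (f (f (f b (f a (f b c))) o) (f a (f b c))) := by conv_lhs => rw [n164 b a c]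
      _ = (f b (f a (f b c))) := by conv_lhs => rw [← n27 b (f a (f b c))]
      _ = (f b (f a c)) := by conv_lhs => rw [← n164 b a c]
      _ = (f b (f a (f a c))) := by conv_lhs => rw [n165 b a c]
  have n169 : ∀ a b c : A, (f a (f b c)) = (f b (f b (f a c))) := by
    intro a b c
    calc (f a (f b c))
      _ = (f b (f a (f a c))) := by conv_lhs => rw [n167 a b c]
      _ = (f b (f a c)) := by conv_lhs => rw [← n165 b a c]
      _ = (f b (f b (f a c))) := by conv_lhs => rw [n163 b a c]
  have n277 : ∀ a b c : A, (f a (f (f b o) c)) = (f a (f (f b c) c)) := by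
    intro a b c
    calc (f a (f (f b o) c))
      _ = (f a (f (f b c) c)) := by conv_lhs => rw [n44 b c]
  have n278 : ∀ a b c : A, (f a (f (f b o) c)) = (f a (f (f c o) b)) := by
    intro a b c
    calc (f a (f (f b o) c))
      _ = (f a (f (f c o) b)) := by conv_lhs => rw [← n45 c b]
  have n280 : ∀ a b c : A, (f a (f (f b o) c)) = (f (f b o) (f a c)) := by
    intro a b c
    calc (f a (f (f b o) c))
      _ = (f (f b o) (f a (f a c))) := by conv_lhs => rw [n167 a (f b o) c]
      _ = (f (f b o) (f a c)) := by conv_lhs => rw [← n165 (f b o) a c]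
  have n281 : ∀ a b c : A, (f a (f (f b o) c)) = (f (f b c) (f a c)) := by
    intro a b c
    calc (f a (f (f b o) c))
      _ = (f a (f (f b c) c)) := by conv_lhs => rw [n277 a b c]
      _ = (f a (f a (f (f b c) c))) := by conv_lhs => rw [n163 a (f b c) c]
      _ = (f (f b c) (f a c)) := by conv_lhs => rw [← n169 (f b c) a c]
  have n282 : ∀ a b c : A, (f a (f (f b o) c)) = (f (f c o) (f a b)) := by
    intro a b c
    calc (f a (f (f b o) c))
      _ = (f a (f (f c o) b)) := by conv_lhs => rw [← n278 a c b]
      _ = (f (f c o) (f a b)) := by conv_lhs => rw [n280 a c b]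
  have n284 : ∀ a b c : A, (f a (f (f b o) c)) = (f (f (f a b) o) c) := by
    intro a b c
    calc (f a (f (f b o) c))
      _ = (f (f c o) (f a b)) := by conv_lhs => rw [n282 a b c]
      _ = (f (f (f a b) o) c) := by conv_lhs => rw [n45 c (f a b)]
  have n285 : ∀ a b c : A, (f a (f (f b o) c)) = (f (f (f a b) c) c) := by
    intro a b c
    calc (f a (f (f b o) c))
      _ = (f (f (f a b) o) c) := by conv_lhs => rw [n284 a b c]
      _ = (f (f (f a b) c) c) := by conv_lhs => rw [n44 (f a b) c]
  have lE : ∀ x y z : A, (f x (f y z)) = (f y (f x z)) := by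
    intro x y z
    calc (f x (f y z))
      _ = (f y (f x (f x z))) := by conv_lhs => rw [n167 x y z]
      _ = (f y (f x z)) := by conv_lhs => rw [← n165 y x z]
  have lSD : ∀ y z x : A, (f (f y z) (f x z)) = (f (f (f x y) z) z) := by
    intro y z x
    calc (f (f y z) (f x z))
      _ = (f x (f (f y o) z)) := by conv_lhs => rw [← n281 x y z]
      _ = (f (f (f x y) z) z) := by conv_lhs => rw [n285 x y z]
  intro x y z
  calc (f x (f (f y z) z))
    _ = (f x (f (f y o) z)) := by conv_lhs => rw [← n277 x y z]
    _ = (f (f (f x y) z) z) := by conv_lhs => rw [n285 x y z]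
end

section
/- Let A be a symmetric implication zroupoid satisfying both the identity (A₂₃): x → ((x → y) → z) ≈ (x → x) → (y → z) and the identity (A₁₂): x → (x → (y → z)) ≈ x → ((x → y) → z). Then A satisfies the identities x' ≈ x and x → y ≈ y → x. -/
theorem stmt19 {A : Type*} (f : A → A → A) (o : A)
    (hI : ∀ x y z : A, f (f x y) z = f (f (f (f z o) x) (f (f y z) o)) o)
    (hI0 : f (f o o) o = o)
    (hInv : ∀ x : A, f (f x o) o = x)
    (hMC : ∀ x y : A, f (f x (f y o)) o = f (f y (f x o)) o)
    (hA23 : ∀ x y z : A, f x (f (f x y) z) = f (f x x) (f y z))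
    (hA12 : ∀ x y z : A, f x (f x (f y z)) = f x (f (f x y) z)) :
    (∀ x : A, f x o = x) ∧ (∀ x y : A, f x y = f y x) := by
  -- injectivity of x ↦ f x o
  have inj : ∀ a b : A, f a o = f b o → a = b := by
    intro a b h
    rw [← hInv a, h, hInv]
  -- L : 0' → x = x
  have L : ∀ x : A, f (f o o) x = x := by
    intro x
    have h := hI x o o
    rw [hInv x] at h
    -- h : x = f (f (f (f o o) x) (f (f o o) o)) o
    rw [hI0, hInv] at h
    exact h.symm
  -- C1 : x → (x → u) = (x → x) → u
  have C1 : ∀ x u : A, f x (f x u) = f (f x x) u := by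
    intro x u
    have h1 := hA12 x (f u o) o
    have h2 := hA23 x (f u o) o
    rw [hInv u] at h1 h2
    rw [h1, h2]
  -- C4 : 0 → (0 → u) = u
  have C4 : ∀ u : A, f o (f o u) = u := by
    intro u; rw [C1, L]
  -- C2₀ : 0 → (0 → y)' = y'
  have C20 : ∀ y : A, f o (f (f o y) o) = f y o := by
    intro y
    have h := hA23 o y o
    rw [L] at h
    exact h
  -- C5 : 0 → v' = (0 → v)'
  have C5 : ∀ v : A, f o (f v o) = f (f o v) o := by
    intro v
    have h := C20 (f o v)
    rw [C4] at h
    exact h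
  -- C6 : x → 0' = (0 → x)'
  have C6 : ∀ x : A, f x (f o o) = f (f o x) o := by
    intro x
    apply inj
    rw [hMC x o, C5]
  -- C8 : 0 → x = x
  have C8 : ∀ x : A, f o x = x := by
    intro x
    have h := hI x o (f o o)
    rw [hI0, C4 o] at h
    -- h : f (f x o) (f o o) = f (f (f o x) (f o o)) o
    rw [C6 (f x o), C6 (f o x), C5, C4, hInv, hInv] at h
    exact h
  -- D1 : z → (y → z)' = (y → z)'
  have D1 : ∀ y z : A, f z (f (f y z) o) = f (f y z) o := by
    intro y z
    have h := hI o y z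
    rw [C8, hInv z] at h
    -- h : f y z = f (f z (f (f y z) o)) o
    apply inj
    rw [← h, hInv]
  -- C9 : x → x' = x'
  have C9 : ∀ x : A, f x (f x o) = f x o := by
    intro x
    have h := D1 o x
    rw [C8] at h
    exact h
  -- C10 : x → x = x
  have C10 : ∀ x : A, f x x = x := by
    intro x
    apply (inj _ _ _).symm
    rw [← C1, C9]
  -- MC* : x → y = y' → x'
  have MCst : ∀ x y : A, f x y = f (f y o) (f x o) := by
    intro x y
    apply inj
    have h := hMC x (f y o)
    rw [hInv y] at h
    exact h
  -- x' = x
  have prime : ∀ x : A, f x o = x := by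
    intro x
    have h := MCst x x
    rw [C10, C10] at h
    exact h.symm
  refine ⟨prime, fun x y => ?_⟩
  rw [MCst x y, prime, prime]
end
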